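/- arXiv:1803.04452 — 5 statements merged into one kernel-verified Lean document; each statement's English description precedes it below -/
import Mathlib

section
/- Let G^X = (V, E^X, s) be an extraction order (rooted DAG with all vertices reachable from the root s). For any vertex l ∈ V and any two incoming edges e, e' of l, the label sets of e and e' coincide: for every vertex j, some confluence with target j contains e if and only if some confluence with target j contains e'. -/
/-- The list of consecutive edges traversed by a path given as a list of vertices. -/
def pathEdges {V : Type*} (p : List V) : List (V × V) := p.zip p.tail

/-- A (simple) directed path from `a` to `b` in the edge set `E`, given as the
nonempty list of visited vertices. -/
def IsPath {V : Type*} (E : Finset (V × V)) (a b : V) (p : List V) : Prop :=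
  p ≠ [] ∧ p.head? = some a ∧ p.getLast? = some b ∧ p.Nodup ∧
    ∀ e ∈ pathEdges p, e ∈ E

/-- An extraction order: a rooted DAG in which every vertex is reachable from the root. -/
structure ExtractionOrder (V : Type*) where
  E : Finset (V × V)
  root : V
  reach : ∀ v : V, ∃ p : List V, IsPath E root v p
  acyclic : ∀ u v : V, (u, v) ∈ E → ¬ ∃ p : List V, IsPath E v u p

/-- A confluence from `i` to `j`: two distinct directed paths from `i` to `j`
that are vertex-disjoint except at their shared endpoints. -/
def IsConfluence {V : Type*} (E : Finset (V × V)) (i j : V) (p₁ p₂ : List V) : Prop :=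
  i ≠ j ∧ p₁ ≠ p₂ ∧ IsPath E i j p₁ ∧ IsPath E i j p₂ ∧
    ∀ v, v ∈ p₁ → v ∈ p₂ → v = i ∨ v = j

/-- The edge `e` is labeled with `j` iff some confluence with target `j` contains `e`. -/
def IsLabeled {V : Type*} (E : Finset (V × V)) (e : V × V) (j : V) : Prop :=
  ∃ i p₁ p₂, IsConfluence E i j p₁ p₂ ∧ (e ∈ pathEdges p₁ ∨ e ∈ pathEdges p₂)

/-- The edge `e` lies on some directed path from `i` to `j`. -/
def OnPath {V : Type*} (E : Finset (V × V)) (i j : V) (e : V × V) : Prop :=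
  ∃ p, IsPath E i j p ∧ e ∈ pathEdges p

/-- The label set of an edge. -/
def labelSet {V : Type*} (E : Finset (V × V)) (e : V × V) : Set V :=
  {j | IsLabeled E e j}

/-- Two edges lie in the same edge bag (of the common tail `e.1`) iff they are linked by a
chain of outgoing edges of `e.1` with pairwise intersecting label sets. -/
def inSameBag {V : Type*} (E : Finset (V × V)) (e e' : V × V) : Prop :=
  Relation.ReflTransGen
    (fun a b => a ∈ E ∧ b ∈ E ∧ a.1 = e.1 ∧ b.1 = e.1 ∧
      (labelSet E a ∩ labelSet E b).Nonempty) e e'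

/-- The union of the label sets of the edges in the bag of `e`. -/
def bagLabels {V : Type*} (E : Finset (V × V)) (e : V × V) : Set V :=
  {j | ∃ e', inSameBag E e e' ∧ IsLabeled E e' j}

/-- The width of an extraction order: one plus the maximal number of labels in any edge bag. -/
noncomputable def widthX {V : Type*} (X : ExtractionOrder V) : ℕ :=
  1 + X.E.sup (fun e => (bagLabels X.E e).ncard)

/-- `EX` is obtained from `E` by possibly reversing the orientation of some edges. -/
def IsOrientationOf {V : Type*} (EX E : Finset (V × V)) : Prop :=
  (∀ u v : V, (u, v) ∈ EX → (u, v) ∈ E ∨ (v, u) ∈ E) ∧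
  (∀ u v : V, (u, v) ∈ E → (u, v) ∈ EX ∨ (v, u) ∈ EX)

/-- The extraction width of a directed graph: the minimum width over all its extraction orders. -/
noncomputable def extractionWidth {V : Type*} (E : Finset (V × V)) : ℕ :=
  sInf {w | ∃ X : ExtractionOrder V, IsOrientationOf X.E E ∧ widthX X = w}

/-- The underlying undirected simple graph of a directed edge set. -/
def underlying {V : Type*} (E : Finset (V × V)) : SimpleGraph V where
  Adj u v := u ≠ v ∧ ((u, v) ∈ E ∨ (v, u) ∈ E)
  symm := by constructor; intro u v h; exact ⟨h.1.symm, h.2.elim Or.inr Or.inl⟩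
  loopless := by constructor; intro u h; exact h.1 rfl

/-! Let `(u, l)` lie on a confluence `p₁, p₂` from `i` to `j`, and let `R` be the part of `p₁`
from `l` to `j`. As `l` cannot reach `u'`, a path `S` from the root to `u'` misses `R`; a path
`Q` from the root through `i` and along `p₂` meets `R` only in `j`, because acyclicity keeps the
root-to-`i` part off `p₁`. Branching at the last vertex of `S` on `Q`, follow `S`, the edge
`(u', l)` and `R` on one side and `Q` on the other: this is a confluence with target `j`
through `(u', l)`. When `l = j`, take for `Q` a root path to `u` followed by `(u, l)` instead. -/

section Paths

variable {V : Type*} {E : Finset (V × V)} {a b c d x : V} {p q s t : List V}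

@[simp] lemma pathEdges_nil : pathEdges ([] : List V) = [] := rfl

@[simp] lemma pathEdges_singleton : pathEdges [a] = [] := rfl

@[simp] lemma pathEdges_cons_cons : pathEdges (a :: b :: t) = (a, b) :: pathEdges (b :: t) := rfl

lemma pathEdges_append_cons (s t : List V) (a : V) :
    pathEdges (s ++ a :: t) = pathEdges (s ++ [a]) ++ pathEdges (a :: t) := by
  induction s with
  | nil => simp
  | cons x s ih => cases s <;> simp_all

lemma mem_pathEdges_iff {e : V × V} : e ∈ pathEdges p ↔ ∃ s t, p = s ++ e.1 :: e.2 :: t := by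
  constructor
  · induction p with
    | nil => simp
    | cons x p ih =>
      cases p with
      | nil => simp
      | cons y p =>
        rw [pathEdges_cons_cons, List.mem_cons]
        rintro (rfl | h)
        · exact ⟨[], p, rfl⟩
        · obtain ⟨s, t, hst⟩ := ih h
          exact ⟨x :: s, t, by rw [hst]; rfl⟩
  · rintro ⟨s, t, rfl⟩
    rw [pathEdges_append_cons]
    simp

lemma snd_mem_of_mem_pathEdges {e : V × V} (h : e ∈ pathEdges p) : e.2 ∈ p := by
  obtain ⟨s, t, rfl⟩ := mem_pathEdges_iff.1 h
  simp

lemma mem_pathEdges_append_of_right {e : V × V} (h : e ∈ pathEdges t) (s : List V) :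
    e ∈ pathEdges (s ++ t) := by
  obtain ⟨s', t', rfl⟩ := mem_pathEdges_iff.1 h
  exact mem_pathEdges_iff.2 ⟨s ++ s', t', by simp⟩

lemma mem_pathEdges_append (hp : p.getLast? = some a) (hq : q.head? = some b) :
    (a, b) ∈ pathEdges (p ++ q) := by
  obtain ⟨p, rfl⟩ := List.getLast?_eq_some_iff.1 hp
  obtain ⟨q, rfl⟩ := List.head?_eq_some_iff.1 hq
  exact mem_pathEdges_iff.2 ⟨p, q, by simp⟩

lemma isPath_singleton : IsPath E a b [x] ↔ a = x ∧ b = x := by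
  simp [IsPath, eq_comm]

lemma isPath_cons_cons :
    IsPath E a b (x :: c :: t) ↔
      a = x ∧ (x, c) ∈ E ∧ x ∉ c :: t ∧ IsPath E c b (c :: t) := by
  simp [IsPath, List.nodup_cons, eq_comm, and_assoc, and_left_comm]

namespace IsPath

lemma ne_nil (h : IsPath E a b p) : p ≠ [] := h.1

lemma nodup (h : IsPath E a b p) : p.Nodup := h.2.2.2.1

lemma edge_mem (h : IsPath E a b p) {e : V × V} (he : e ∈ pathEdges p) : e ∈ E :=
  h.2.2.2.2 e he

lemma head_mem (h : IsPath E a b p) : a ∈ p := List.mem_of_mem_head? h.2.1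

lemma getLast_mem (h : IsPath E a b p) : b ∈ p := List.mem_of_mem_getLast? h.2.2.1

lemma right_of_append_cons (h : IsPath E a b (s ++ x :: t)) : IsPath E x b (x :: t) := by
  refine ⟨List.cons_ne_nil _ _, rfl, ?_, ?_, fun e he => h.edge_mem ?_⟩
  · simpa [List.getLast?_append_cons] using h.2.2.1
  · exact (List.sublist_append_right s _).nodup h.nodup
  · rw [pathEdges_append_cons]; exact List.mem_append_right _ he

lemma left_of_append_cons (h : IsPath E a b (s ++ x :: t)) : IsPath E a x (s ++ [x]) := by
  refine ⟨by simp, ?_, by simp, ?_, fun e he => h.edge_mem ?_⟩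
  · cases s <;> simpa using h.2.1
  · exact (List.IsPrefix.sublist ⟨t, by simp⟩).nodup h.nodup
  · rw [pathEdges_append_cons]; exact List.mem_append_left _ he

lemma right_of_append_cons_cons (h : IsPath E a b (s ++ x :: c :: t)) :
    IsPath E c b (c :: t) :=
  right_of_append_cons (s := s ++ [x]) (by simpa using h)

lemma append (hp : IsPath E a b p) (hq : IsPath E c d q) (hbc : (b, c) ∈ E)
    (hpq : ∀ x ∈ p, x ∉ q) : IsPath E a d (p ++ q) := by
  obtain ⟨p', rfl⟩ := List.getLast?_eq_some_iff.1 hp.2.2.1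
  obtain ⟨q', rfl⟩ := List.head?_eq_some_iff.1 hq.2.1
  refine ⟨by simp, by simpa using hp.2.1, by simpa using hq.2.2.1, ?_, ?_⟩
  · exact List.nodup_append.2 ⟨hp.nodup, hq.nodup, fun x hx y hy hxy => hpq x hx (hxy ▸ hy)⟩
  · intro e he
    rw [List.append_assoc, List.singleton_append, pathEdges_append_cons,
      pathEdges_cons_cons, List.mem_append, List.mem_cons] at he
    rcases he with he | rfl | he
    · exact hp.edge_mem he
    · exact hbc
    · exact hq.edge_mem he

lemma exists_subset_append (hp : IsPath E a b p) (hq : IsPath E b c q) :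
    ∃ r, IsPath E a c r ∧ r ⊆ p ++ q := by
  induction p generalizing a with
  | nil => exact absurd rfl hp.ne_nil
  | cons x p ih =>
    cases p with
    | nil =>
      obtain ⟨rfl, rfl⟩ := isPath_singleton.1 hp
      exact ⟨q, hq, List.subset_append_right _ _⟩
    | cons y p =>
      obtain ⟨rfl, hay, -, hp⟩ := isPath_cons_cons.1 hp
      obtain ⟨r, hr, hsub⟩ := ih hp
      by_cases har : a ∈ r
      · obtain ⟨s, t, rfl⟩ := List.append_of_mem har
        exact ⟨a :: t, hr.right_of_append_cons, fun z hz => List.mem_cons_of_mem _ <|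
          hsub (List.mem_append_right _ hz)⟩
      · obtain ⟨r, rfl⟩ := List.head?_eq_some_iff.1 hr.2.1
        exact ⟨a :: y :: r, isPath_cons_cons.2 ⟨rfl, hay, har, hr⟩,
          List.cons_subset_cons _ hsub⟩

end IsPath

end Paths

def Reaches {V : Type*} (E : Finset (V × V)) (a b : V) : Prop := ∃ p, IsPath E a b p

section Reach

variable {V : Type*} {E : Finset (V × V)} {a b c x : V} {p : List V}

lemma IsPath.reaches (h : IsPath E a b p) : Reaches E a b := ⟨p, h⟩

lemma Reaches.trans (hab : Reaches E a b) (hbc : Reaches E b c) : Reaches E a c := by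
  obtain ⟨p, hp⟩ := hab
  obtain ⟨q, hq⟩ := hbc
  obtain ⟨r, hr, -⟩ := hp.exists_subset_append hq
  exact hr.reaches

lemma IsPath.reaches_of_mem (h : IsPath E a b p) (hx : x ∈ p) :
    Reaches E a x ∧ Reaches E x b := by
  obtain ⟨s, t, rfl⟩ := List.append_of_mem hx
  exact ⟨h.left_of_append_cons.reaches, h.right_of_append_cons.reaches⟩

end Reach

lemma IsConfluence.symm {V : Type*} {E : Finset (V × V)} {i j : V} {p₁ p₂ : List V}
    (h : IsConfluence E i j p₁ p₂) : IsConfluence E i j p₂ p₁ :=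
  ⟨h.1, h.2.1.symm, h.2.2.2.1, h.2.2.1, fun v h₂ h₁ => h.2.2.2.2 v h₁ h₂⟩

lemma List.exists_eq_append_cons_forall_not {α : Type*} {P : α → Prop} {l : List α}
    (h : ∃ x ∈ l, P x) : ∃ s x t, l = s ++ x :: t ∧ P x ∧ ∀ y ∈ t, ¬ P y := by
  induction l using List.reverseRecOn with
  | nil => simp at h
  | append_singleton l a ih =>
    by_cases ha : P a
    · exact ⟨l, a, [], rfl, ha, by simp⟩
    · obtain ⟨x, hxl, hx⟩ := h
      obtain hxl | rfl := List.mem_append.1 hxl |>.imp_right List.mem_singleton.1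
      · obtain ⟨s, y, t, rfl, hy, ht⟩ := ih ⟨x, hxl, hx⟩
        refine ⟨s, y, t ++ [a], by simp, hy, ?_⟩
        simpa [or_imp, forall_and] using ⟨ht, ha⟩
      · exact absurd hx ha

theorem isLabeled_of_paths {V : Type*} {E : Finset (V × V)} {u l j a b : V} {S R Q : List V}
    (hS : IsPath E a u S) (hR : IsPath E l j R) (hul : (u, l) ∈ E) (hSR : ∀ x ∈ S, x ∉ R)
    (hQ : IsPath E b j Q) (hSQ : ∃ x ∈ S, x ∈ Q) (hQR : ∀ x ∈ Q, x ∈ R → x = j)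
    (hQul : (u, l) ∉ pathEdges Q) :
    IsLabeled E (u, l) j := by
  obtain ⟨S₁, i, S₂, rfl, hiQ, hS₂Q⟩ := List.exists_eq_append_cons_forall_not hSQ
  obtain ⟨Q₁, Q₂, rfl⟩ := List.append_of_mem hiQ
  have hS' : IsPath E i u (i :: S₂) := hS.right_of_append_cons
  have hSR' : ∀ x ∈ i :: S₂, x ∉ R := fun x hx => hSR x (List.mem_append_right _ hx)
  have hA : IsPath E i j ((i :: S₂) ++ R) := hS'.append hR hul hSR'
  have hulA : (u, l) ∈ pathEdges ((i :: S₂) ++ R) := mem_pathEdges_append hS'.2.2.1 hR.2.1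
  refine ⟨i, _, _, ⟨?_, ?_, hA, hQ.right_of_append_cons, ?_⟩, Or.inl hulA⟩
  · rintro rfl
    exact hSR' _ List.mem_cons_self hR.getLast_mem
  · intro hAB
    exact hQul (mem_pathEdges_append_of_right (hAB ▸ hulA) Q₁)
  · intro v hvA hvB
    have hvQ : v ∈ Q₁ ++ i :: Q₂ := List.mem_append_right _ hvB
    rcases List.mem_append.1 hvA with hv | hv
    · exact (List.mem_cons.1 hv).imp_right fun hv => absurd hvQ (hS₂Q v hv)
    · exact Or.inr (hQR v hvQ hv)

namespace ExtractionOrder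

variable {V : Type*} (X : ExtractionOrder V) {a b i j l u u' : V} {s t p₂ : List V}

lemma reaches_antisymm (hab : Reaches X.E a b) (hba : Reaches X.E b a) : a = b := by
  obtain ⟨p, hp⟩ := hab
  cases p with
  | nil => exact absurd rfl hp.ne_nil
  | cons x p =>
    cases p with
    | nil =>
      obtain ⟨rfl, rfl⟩ := isPath_singleton.1 hp
      rfl
    | cons y p =>
      obtain ⟨rfl, hay, -, hp⟩ := isPath_cons_cons.1 hp
      exact absurd (hp.reaches.trans hba) (X.acyclic a y hay)

lemma exists_path_from_root_avoiding_suffix (hc : IsConfluence X.E i j (s ++ u :: l :: t) p₂)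
    (hne : u ≠ u') :
    ∃ Q, IsPath X.E X.root j Q ∧ (∀ x ∈ Q, x ∈ l :: t → x = j) ∧
      (u', l) ∉ pathEdges Q := by
  obtain ⟨-, -, hp₁, hp₂, hdisj⟩ := hc
  have hul : (u, l) ∈ X.E := hp₁.edge_mem (mem_pathEdges_iff.2 ⟨s, t, rfl⟩)
  have hR : IsPath X.E l j (l :: t) := hp₁.right_of_append_cons_cons
  have hlu : ¬ Reaches X.E l u := X.acyclic u l hul
  by_cases hlj : l = j
  · subst hlj
    obtain ⟨P, hP⟩ := X.reach u
    have hlP : l ∉ P := fun h => hlu (hP.reaches_of_mem h).2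
    refine ⟨P ++ [l], hP.append (isPath_singleton.2 ⟨rfl, rfl⟩) hul
      (fun x hx h => hlP (List.mem_singleton.1 h ▸ hx)), ?_, ?_⟩
    · intro x hxQ hxR
      rcases List.mem_append.1 hxQ with hx | hx
      · exact absurd ((hR.reaches_of_mem hxR).1.trans (hP.reaches_of_mem hx).2) hlu
      · exact List.mem_singleton.1 hx
    · obtain ⟨P, rfl⟩ := List.getLast?_eq_some_iff.1 hP.2.2.1
      rw [List.append_assoc, List.singleton_append, pathEdges_append_cons]
      simp only [pathEdges_cons_cons, pathEdges_singleton, List.mem_append, List.mem_singleton,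
        Prod.mk.injEq, and_true, not_or]
      exact ⟨fun h => hlP (snd_mem_of_mem_pathEdges h), Ne.symm hne⟩
  · obtain ⟨P, hP⟩ := X.reach i
    obtain ⟨Q, hQ, hQsub⟩ := hP.exists_subset_append hp₂
    have hiR : i ∉ l :: t := fun h =>
      hlu ((hR.reaches_of_mem h).1.trans (hp₁.reaches_of_mem (by simp)).1)
    have hQR : ∀ x ∈ Q, x ∈ l :: t → x = j := by
      intro x hxQ hxR
      have hxp₁ : x ∈ s ++ u :: l :: t := List.mem_append_right _ (List.mem_cons_of_mem _ hxR)
      have hxi : x ≠ i := by rintro rfl; exact hiR hxR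
      rcases List.mem_append.1 (hQsub hxQ) with hxP | hxp₂
      · exact absurd (X.reaches_antisymm (hP.reaches_of_mem hxP).2
          (hp₁.reaches_of_mem hxp₁).1) hxi
      · exact (hdisj x hxp₁ hxp₂).resolve_left hxi
    exact ⟨Q, hQ, hQR, fun h =>
      hlj (hQR l (snd_mem_of_mem_pathEdges h) List.mem_cons_self)⟩

theorem isLabeled_of_isLabeled (he' : (u', l) ∈ X.E) (h : IsLabeled X.E (u, l) j) :
    IsLabeled X.E (u', l) j := by
  rcases eq_or_ne u u' with rfl | hne
  · exact h
  obtain ⟨i, p₁, p₂, hc, hmem⟩ := h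
  wlog h₁ : (u, l) ∈ pathEdges p₁ generalizing p₁ p₂
  · exact this p₂ p₁ hc.symm hmem.symm (hmem.resolve_left h₁)
  obtain ⟨s, t, rfl⟩ := mem_pathEdges_iff.1 h₁
  have hR : IsPath X.E l j (l :: t) := hc.2.2.1.right_of_append_cons_cons
  obtain ⟨S, hS⟩ := X.reach u'
  obtain ⟨Q, hQ, hQR, hQe⟩ := X.exists_path_from_root_avoiding_suffix hc hne
  refine isLabeled_of_paths hS hR he' (fun x hxS hxR => ?_) hQ
    ⟨X.root, hS.head_mem, hQ.head_mem⟩ hQR hQe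
  exact X.acyclic u' l he' ((hR.reaches_of_mem hxR).1.trans (hS.reaches_of_mem hxS).2)

end ExtractionOrder

/-- Any two incoming edges of a vertex `l` of an extraction order carry
the same label sets. -/
theorem stmt1 {V : Type*} (X : ExtractionOrder V) (l u u' : V)
    (he : (u, l) ∈ X.E) (he' : (u', l) ∈ X.E) :
    ∀ j : V, IsLabeled X.E (u, l) j ↔ IsLabeled X.E (u', l) j :=
  fun _ => ⟨X.isLabeled_of_isLabeled he', X.isLabeled_of_isLabeled he⟩
end

section
/- Let Ḡ = (V̄, Ē) be a connected undirected graph, and construct the directed graph G_VC on vertex set V̄ ∪ {r̂} with edge set consisting of one orientation of each edge of Ē plus edges (r̂, i) for every i ∈ V̄. Then the minimum width over all extraction orders of G_VC rooted at r̂ equals the size of a minimum vertex cover of Ḡ plus one. -/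
/-- A vertex cover of an undirected graph. -/
def IsVertexCover {V : Type*} (G : SimpleGraph V) (S : Finset V) : Prop :=
  ∀ u v : V, G.Adj u v → u ∈ S ∨ v ∈ S

/-- The size of a minimum vertex cover. -/
noncomputable def minVertexCover {V : Type*} (G : SimpleGraph V) : ℕ :=
  sInf {k | ∃ S : Finset V, IsVertexCover G S ∧ S.card = k}

/-- The directed graph `G_VC`: one orientation of each edge of `G` plus an edge from the
extra root `none` to every original vertex. -/
def GVC {V : Type*} [Fintype V] [LinearOrder V] (G : SimpleGraph V) [DecidableRel G.Adj] :
    Finset (Option V × Option V) :=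
  (((Finset.univ : Finset (V × V)).filter
      (fun p => p.1 < p.2 ∧ G.Adj p.1 p.2)).image (fun p => (some p.1, some p.2))) ∪
  (Finset.univ.image fun i : V => ((none : Option V), some i))


/-!
Upper bound: orient every edge of `Ḡ` towards a minimum vertex cover `S` (between two vertices
of `S`, towards the larger one). The result is acyclic, and a vertex outside `S` has the root as
its only in-neighbour, so it is the target of no confluence; hence every label lies in `S`.

Lower bound: in any extraction order rooted at `r̂` the root edges point away from `r̂`, and an
edge `a → b` closes the confluence `r̂ → b`, `r̂ → a → b`, which puts the label `b` on both
`(r̂, a)` and `(r̂, b)`. As `Ḡ` is connected, all root edges then lie in one bag, whose labels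
include the heads of all edges of `Ḡ`; these heads form a vertex cover.
-/

section Paths

variable {V : Type*} {E : Finset (V × V)}

lemma isPath_singleton_s6 (a : V) : IsPath E a a [a] := by
  simp [IsPath, pathEdges]

lemma isPath_cons_cons_iff {a b c : V} {l : List V} :
    IsPath E a c (a :: b :: l) ↔ (a, b) ∈ E ∧ a ∉ b :: l ∧ IsPath E b c (b :: l) := by
  simp only [IsPath, pathEdges, List.tail_cons, List.zip_cons_cons, List.mem_cons,
    forall_eq_or_imp, List.getLast?_cons_cons, List.nodup_cons, ne_eq, reduceCtorEq,
    not_false_eq_true, List.head?_cons, true_and]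
  tauto

lemma isPath_pair {a b : V} (h : (a, b) ∈ E) (hab : a ≠ b) : IsPath E a b [a, b] := by
  simp [isPath_cons_cons_iff, isPath_singleton_s6, h, hab]

lemma isPath_triple {a b c : V} (hab : (a, b) ∈ E) (hbc : (b, c) ∈ E) (hab' : a ≠ b)
    (hac : a ≠ c) (hbc' : b ≠ c) : IsPath E a c [a, b, c] := by
  simp [isPath_cons_cons_iff, isPath_singleton_s6, hab, hbc, hab', hac, hbc']

lemma IsPath.head_eq {a b x : V} {l : List V} (h : IsPath E a b (x :: l)) : x = a := by
  simpa using h.2.1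

lemma IsPath.tail_eq_nil_of_self {a : V} {l : List V} (h : IsPath E a a (a :: l)) :
    l = [] := by
  obtain ⟨-, -, hlast, hnd, -⟩ := h
  by_contra hl
  rw [List.getLast?_cons, List.getLast?_eq_some_getLast hl] at hlast
  simp only [Option.getD_some, Option.some.injEq] at hlast
  exact (List.nodup_cons.mp hnd).1 (hlast ▸ List.getLast_mem hl)

lemma IsPath.le_of_forall_edge_lt {α : Type*} [Preorder α] {f : V → α}
    (hf : ∀ x y, (x, y) ∈ E → f x < f y) :
    ∀ {p : List V} {a b : V}, IsPath E a b p → f a ≤ f b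
  | [], _, _, h => absurd rfl h.1
  | [x], a, b, h => by
    obtain rfl := h.head_eq
    obtain rfl : b = x := by simpa using h.2.2.1.symm
    exact le_rfl
  | x :: y :: l, a, b, h => by
    obtain rfl := h.head_eq
    obtain ⟨hxy, -, hy⟩ := isPath_cons_cons_iff.mp h
    exact (hf _ _ hxy).le.trans (IsPath.le_of_forall_edge_lt hf hy)

lemma IsPath.exists_pred {a j : V} :
    ∀ {p : List V}, IsPath E a j p → a ≠ j →
      ∃ x ∈ p, x ≠ j ∧ (x, j) ∈ E ∧ (x = a → p = [a, j])
  | [], h, _ => absurd rfl h.1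
  | [x], h, hne => by
    obtain rfl := h.head_eq
    exact absurd (by simpa using h.2.2.1) hne
  | x :: b :: l, h, hne => by
    obtain rfl := h.head_eq
    obtain ⟨hxb, hx, hb⟩ := isPath_cons_cons_iff.mp h
    by_cases hbj : b = j
    · subst hbj
      obtain rfl := hb.tail_eq_nil_of_self
      exact ⟨x, by simp, hne, hxb, fun _ => rfl⟩
    · obtain ⟨y, hy, hyj, hyE, -⟩ := hb.exists_pred hbj
      exact ⟨y, List.mem_cons_of_mem _ hy, hyj, hyE, fun hyx => absurd (hyx ▸ hy) hx⟩

end Paths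

section Labels

variable {V : Type*} {E : Finset (V × V)}

lemma IsConfluence.exists_ne_inNeighbors {i j : V} {p₁ p₂ : List V}
    (h : IsConfluence E i j p₁ p₂) : ∃ x₁ x₂, x₁ ≠ x₂ ∧ (x₁, j) ∈ E ∧ (x₂, j) ∈ E := by
  obtain ⟨hij, hp, hp₁, hp₂, hdisj⟩ := h
  obtain ⟨x₁, hx₁, hx₁j, hx₁E, hx₁i⟩ := hp₁.exists_pred hij
  obtain ⟨x₂, hx₂, -, hx₂E, hx₂i⟩ := hp₂.exists_pred hij
  refine ⟨x₁, x₂, fun hx => ?_, hx₁E, hx₂E⟩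
  subst hx
  rcases hdisj x₁ hx₁ hx₂ with rfl | rfl
  · exact hp ((hx₁i rfl).trans (hx₂i rfl).symm)
  · exact hx₁j rfl

lemma IsLabeled.exists_ne_inNeighbors {e : V × V} {j : V} (h : IsLabeled E e j) :
    ∃ x₁ x₂, x₁ ≠ x₂ ∧ (x₁, j) ∈ E ∧ (x₂, j) ∈ E := by
  obtain ⟨_, _, _, hc, _⟩ := h
  exact IsConfluence.exists_ne_inNeighbors hc

lemma isLabeled_of_triangle {r a b : V} (hra : (r, a) ∈ E) (hrb : (r, b) ∈ E)
    (hab : (a, b) ∈ E) (hra' : r ≠ a) (hrb' : r ≠ b) (hab' : a ≠ b) :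
    IsLabeled E (r, a) b ∧ IsLabeled E (r, b) b := by
  have hconf : IsConfluence E r b [r, b] [r, a, b] := by
    refine ⟨hrb', by simp, isPath_pair hrb hrb', isPath_triple hra hab hra' hrb' hab', ?_⟩
    simp only [List.mem_cons, List.not_mem_nil, or_false]
    tauto
  exact ⟨⟨r, _, _, hconf, Or.inr (by simp [pathEdges])⟩,
    ⟨r, _, _, hconf, Or.inl (by simp [pathEdges])⟩⟩

lemma inSameBag_of_reachable {W : Type*} {G : SimpleGraph W} {r : V} {g : W → V}
    (hg : ∀ w, (r, g w) ∈ E)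
    (hadj : ∀ a b, G.Adj a b → (labelSet E (r, g a) ∩ labelSet E (r, g b)).Nonempty)
    {a b : W} (hab : G.Reachable a b) : inSameBag E (r, g a) (r, g b) := by
  obtain ⟨w⟩ := hab
  induction w with
  | nil => exact .refl
  | @cons u v _ h _ ih => exact .head (b := (r, g v)) ⟨hg u, hg v, rfl, rfl, hadj u v h⟩ ih

end Labels

namespace ExtractionOrder

variable {V : Type*} (X : ExtractionOrder V)

lemma not_mem_into_root (v : V) : (v, X.root) ∉ X.E := fun h =>
  X.acyclic v X.root h (X.reach v)

lemma ncard_bagLabels_add_one_le_widthX {e : V × V} (he : e ∈ X.E) :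
    (bagLabels X.E e).ncard + 1 ≤ widthX X := by
  have := Finset.le_sup (f := fun e => (bagLabels X.E e).ncard) he
  simp only [widthX]
  omega

lemma widthX_le_of_isLabeled_mem (L : Finset V) (hL : ∀ e j, IsLabeled X.E e j → j ∈ L) :
    widthX X ≤ 1 + L.card := by
  refine Nat.add_le_add_left (Finset.sup_le fun e _ => ?_) 1
  calc (bagLabels X.E e).ncard ≤ (L : Set V).ncard :=
        Set.ncard_le_ncard (fun j ⟨_, _, hj⟩ => hL _ j hj) L.finite_toSet
    _ = L.card := Set.ncard_coe_finset L

end ExtractionOrder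

section Orientation

variable {V α : Type*} [DecidableEq V] [LinearOrder α]

def orientBy (E : Finset (V × V)) (f : V → α) : Finset (V × V) :=
  (E ∪ E.image Prod.swap).filter fun e => f e.1 < f e.2

lemma mem_orientBy {E : Finset (V × V)} {f : V → α} {x y : V} :
    (x, y) ∈ orientBy E f ↔ ((x, y) ∈ E ∨ (y, x) ∈ E) ∧ f x < f y := by
  simp [orientBy, Prod.swap_eq_iff_eq_swap]

lemma isOrientationOf_orientBy {E : Finset (V × V)} {f : V → α} (hf : Function.Injective f)
    (hE : ∀ x, (x, x) ∉ E) : IsOrientationOf (orientBy E f) E := by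
  refine ⟨fun x y h => (mem_orientBy.mp h).1, fun x y h => ?_⟩
  have hxy : f x ≠ f y := hf.ne fun hxy => hE x (hxy ▸ h)
  rcases hxy.lt_or_gt with hlt | hlt
  · exact Or.inl (mem_orientBy.mpr ⟨Or.inl h, hlt⟩)
  · exact Or.inr (mem_orientBy.mpr ⟨Or.inr h, hlt⟩)

end Orientation

section GVC

variable {V : Type*} [Fintype V] [LinearOrder V] {G : SimpleGraph V} [DecidableRel G.Adj]

@[simp]
lemma some_some_mem_GVC {a b : V} : (some a, some b) ∈ GVC G ↔ a < b ∧ G.Adj a b := by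
  simp [GVC]

@[simp]
lemma none_some_mem_GVC (i : V) : (none, some i) ∈ GVC G := by
  simp [GVC]

@[simp]
lemma not_mem_GVC_none (x : Option V) : (x, none) ∉ GVC G := by
  simp [GVC]

lemma mem_GVC_or_swap_iff_adj {a b : V} :
    (some a, some b) ∈ GVC G ∨ (some b, some a) ∈ GVC G ↔ G.Adj a b := by
  simp only [some_some_mem_GVC]
  constructor
  · rintro (⟨-, h⟩ | ⟨-, h⟩)
    exacts [h, h.symm]
  · intro h
    rcases lt_trichotomy a b with hab | rfl | hab
    exacts [Or.inl ⟨hab, h⟩, absurd h (G.irrefl), Or.inr ⟨hab, h.symm⟩]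

lemma not_mem_GVC_self (x : Option V) : (x, x) ∉ GVC G := by
  cases x with
  | none => exact not_mem_GVC_none none
  | some a => simp

end GVC

section UpperBound

variable {V : Type*} [LinearOrder V]

/-- The root first, then the vertices outside `S`, then those of `S` in increasing order. -/
def coverRank (S : Finset V) (x : Option V) : WithBot (Bool ×ₗ V) :=
  WithBot.map (fun v => toLex (decide (v ∈ S), v)) x

lemma coverRank_injective (S : Finset V) : Function.Injective (coverRank S) :=
  WithBot.map_injective fun _ _ h => congrArg Prod.snd (toLex.injective h)

lemma coverRank_none_lt (S : Finset V) (v : V) : coverRank S none < coverRank S (some v) :=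
  WithBot.bot_lt_coe _

lemma coverRank_some_lt_some_iff (S : Finset V) {u v : V} :
    coverRank S (some u) < coverRank S (some v) ↔
      toLex (decide (u ∈ S), u) < toLex (decide (v ∈ S), v) :=
  WithBot.coe_lt_coe

variable [Fintype V] {G : SimpleGraph V} [DecidableRel G.Adj]

variable (G) in
def coverOrder (S : Finset V) : ExtractionOrder (Option V) where
  E := orientBy (GVC G) (coverRank S)
  root := none
  reach
    | none => ⟨_, isPath_singleton_s6 none⟩
    | some v => ⟨_, isPath_pair
        (mem_orientBy.mpr ⟨Or.inl (none_some_mem_GVC v), coverRank_none_lt S v⟩) (by simp)⟩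
  acyclic u v huv := fun ⟨_, hp⟩ =>
    ((mem_orientBy.mp huv).2.trans_le
      (hp.le_of_forall_edge_lt fun _ _ h => (mem_orientBy.mp h).2)).false

lemma eq_none_of_mem_coverOrder {S : Finset V} (hS : IsVertexCover G S) {x : Option V} {v : V}
    (hx : (x, some v) ∈ (coverOrder G S).E) (hv : v ∉ S) : x = none := by
  obtain ⟨hE, hlt⟩ := mem_orientBy.mp hx
  cases x with
  | none => rfl
  | some u =>
    have hu : u ∈ S := (hS u v (mem_GVC_or_swap_iff_adj.mp hE)).resolve_right hv
    rw [coverRank_some_lt_some_iff, Prod.Lex.toLex_lt_toLex] at hlt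
    simp [hu, hv, Bool.lt_iff] at hlt

lemma mem_of_isLabeled_coverOrder {S : Finset V} (hS : IsVertexCover G S)
    {e : Option V × Option V} {j : Option V} (h : IsLabeled (coverOrder G S).E e j) :
    j ∈ S.map Function.Embedding.some := by
  obtain ⟨x₁, x₂, hne, h₁, h₂⟩ := h.exists_ne_inNeighbors
  cases j with
  | none => exact absurd (mem_orientBy.mp h₁).2 (not_lt_of_ge bot_le)
  | some v =>
    by_contra hv
    have hv : v ∉ S := by simpa using hv
    exact hne ((eq_none_of_mem_coverOrder hS h₁ hv).trans
      (eq_none_of_mem_coverOrder hS h₂ hv).symm)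

lemma widthX_coverOrder_le {S : Finset V} (hS : IsVertexCover G S) :
    widthX (coverOrder G S) ≤ S.card + 1 := by
  have := (coverOrder G S).widthX_le_of_isLabeled_mem _
    fun _ _ h => mem_of_isLabeled_coverOrder hS h
  rwa [Finset.card_map, add_comm] at this

lemma coverOrder_isOrientationOf (S : Finset V) : IsOrientationOf (coverOrder G S).E (GVC G) :=
  isOrientationOf_orientBy (coverRank_injective S) not_mem_GVC_self

end UpperBound

section LowerBound

variable {V : Type*} [Fintype V] [LinearOrder V] {G : SimpleGraph V} [DecidableRel G.Adj]
  {X : ExtractionOrder (Option V)}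

lemma none_some_mem_of_isOrientationOf (hX : IsOrientationOf X.E (GVC G))
    (hroot : X.root = none) (i : V) : (none, some i) ∈ X.E :=
  (hX.2 _ _ (none_some_mem_GVC i)).resolve_right (hroot ▸ X.not_mem_into_root (some i))

lemma adj_of_some_some_mem (hX : IsOrientationOf X.E (GVC G)) {a b : V}
    (h : (some a, some b) ∈ X.E) : G.Adj a b :=
  mem_GVC_or_swap_iff_adj.mp (hX.1 _ _ h)

lemma some_some_mem_or_swap_of_adj (hX : IsOrientationOf X.E (GVC G)) {a b : V}
    (h : G.Adj a b) : (some a, some b) ∈ X.E ∨ (some b, some a) ∈ X.E := by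
  rcases mem_GVC_or_swap_iff_adj.mpr h with h' | h'
  · exact hX.2 _ _ h'
  · exact (hX.2 _ _ h').symm

lemma isLabeled_of_some_some_mem (hX : IsOrientationOf X.E (GVC G)) (hroot : X.root = none)
    {a b : V} (h : (some a, some b) ∈ X.E) :
    IsLabeled X.E (none, some a) (some b) ∧ IsLabeled X.E (none, some b) (some b) :=
  isLabeled_of_triangle (none_some_mem_of_isOrientationOf hX hroot a)
    (none_some_mem_of_isOrientationOf hX hroot b) h (by simp) (by simp)
    (by simpa using (adj_of_some_some_mem hX h).ne)

lemma minVertexCover_add_one_le_widthX (hconn : G.Connected)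
    (hX : IsOrientationOf X.E (GVC G)) (hroot : X.root = none) :
    minVertexCover G + 1 ≤ widthX X := by
  classical
  obtain ⟨v₀⟩ := hconn.nonempty
  have hroot_edge := none_some_mem_of_isOrientationOf hX hroot
  have hbag : ∀ v, inSameBag X.E (none, some v₀) (none, some v) := by
    refine fun v => inSameBag_of_reachable (g := some) hroot_edge (fun a b hab => ?_) (hconn v₀ v)
    rcases some_some_mem_or_swap_of_adj hX hab with h | h
    · exact ⟨some b, isLabeled_of_some_some_mem hX hroot h⟩
    · exact ⟨some a, (isLabeled_of_some_some_mem hX hroot h).symm⟩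
  set T : Finset V := {v | ∃ u, (some u, some v) ∈ X.E}
  have hT : IsVertexCover G T := fun u v hadj => by
    rcases some_some_mem_or_swap_of_adj hX hadj with h | h
    · exact Or.inr (by simpa [T] using ⟨u, h⟩)
    · exact Or.inl (by simpa [T] using ⟨v, h⟩)
  have hTbag : ((T.map Function.Embedding.some : Finset (Option V)) : Set (Option V)) ⊆
      bagLabels X.E (none, some v₀) := by
    intro j hj
    obtain ⟨v, hv, rfl⟩ := by simpa using hj
    obtain ⟨u, hu⟩ := by simpa [T] using hv
    exact ⟨_, hbag v, (isLabeled_of_some_some_mem hX hroot hu).2⟩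
  have hcard : T.card ≤ (bagLabels X.E (none, some v₀)).ncard := by
    simpa only [Set.ncard_coe_finset, Finset.card_map] using Set.ncard_le_ncard hTbag
  calc minVertexCover G + 1 ≤ T.card + 1 := Nat.succ_le_succ (Nat.sInf_le ⟨T, hT, rfl⟩)
    _ ≤ (bagLabels X.E (none, some v₀)).ncard + 1 := Nat.succ_le_succ hcard
    _ ≤ widthX X := X.ncard_bagLabels_add_one_le_widthX (hroot_edge v₀)

end LowerBound

lemma exists_isVertexCover_card_eq {V : Type*} [Fintype V] (G : SimpleGraph V) :
    ∃ S : Finset V, IsVertexCover G S ∧ S.card = minVertexCover G :=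
  Nat.sInf_mem (s := {k | ∃ S : Finset V, IsVertexCover G S ∧ S.card = k})
    ⟨_, Finset.univ, fun u _ _ => Or.inl (Finset.mem_univ u), rfl⟩

/-- For a connected graph `G`, the minimum width over all extraction orders
of `G_VC` rooted at the extra root equals the size of a minimum vertex cover plus one. -/
theorem stmt6 {V : Type*} [Fintype V] [LinearOrder V] (G : SimpleGraph V)
    [DecidableRel G.Adj] (hconn : G.Connected) :
    sInf {w | ∃ X : ExtractionOrder (Option V),
        IsOrientationOf X.E (GVC G) ∧ X.root = (none : Option V) ∧ widthX X = w}
      = minVertexCover G + 1 := by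
  obtain ⟨S, hS, hcard⟩ := exists_isVertexCover_card_eq G
  have hmem : widthX (coverOrder G S) ∈ {w | ∃ X : ExtractionOrder (Option V),
      IsOrientationOf X.E (GVC G) ∧ X.root = (none : Option V) ∧ widthX X = w} :=
    ⟨_, coverOrder_isOrientationOf S, rfl, rfl⟩
  have hlower : ∀ w ∈ {w | ∃ X : ExtractionOrder (Option V),
      IsOrientationOf X.E (GVC G) ∧ X.root = (none : Option V) ∧ widthX X = w},
      minVertexCover G + 1 ≤ w := by
    rintro _ ⟨X, hX, hroot, rfl⟩
    exact minVertexCover_add_one_le_widthX hconn hX hroot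
  exact le_antisymm ((Nat.sInf_le hmem).trans (hcard ▸ widthX_coverOrder_le hS))
    (le_csInf ⟨_, hmem⟩ hlower)
end

section
/- Let {A_r}_{r∈R} be independent random variables with A_r ∈ [0, M_r] for constants M_r > 0, and let A = Σ_r A_r with E[A] ≤ d for some d > 0. Suppose 0 < ε ≤ 1 and constants m_r > 0 satisfy m_r ≤ ε·d and M_r/m_r well-defined; let Δ = Σ_r (M_r/m_r)² and n ≥ 3. Then P(A ≥ (1 + ε·√(2·Δ·log n))·d) ≤ n^{−4}. -/
open MeasureTheory ProbabilityTheory Real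

/-!
Since `E[A] ≤ d`, the event lies in `{Σ (A_r - E A_r) ≥ t}` with `t = ε d √(2 Δ log n)`.
Hoeffding's inequality bounds its probability by `exp (-2 t² / Σ M_r²)`, and `m_r ≤ ε d` gives
`M_r ≤ ε d (M_r / m_r)`, hence `Σ M_r² ≤ ε² d² Δ` and the exponent is at most `-4 log n`.
-/

theorem measureReal_sum_sub_integral_ge_le_of_mem_Icc {Ω ι : Type*} [MeasurableSpace Ω]
    {μ : Measure Ω} [IsProbabilityMeasure μ] {X : ι → Ω → ℝ} (hX : ∀ i, Measurable (X i))
    (hindep : iIndepFun X μ) {s : Finset ι} {a b : ι → ℝ}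
    (hab : ∀ i ∈ s, ∀ ω, X i ω ∈ Set.Icc (a i) (b i)) {t : ℝ} (ht : 0 ≤ t) :
    μ.real {ω | t ≤ ∑ i ∈ s, (X i ω - μ[X i])}
      ≤ exp (-2 * t ^ 2 / ∑ i ∈ s, (b i - a i) ^ 2) := by
  have hcentred : iIndepFun (fun i ω ↦ X i ω - μ[X i]) μ :=
    hindep.comp (fun i x ↦ x - ∫ ω, X i ω ∂μ) fun _ ↦ measurable_id.sub_const _
  refine (HasSubgaussianMGF.measure_sum_ge_le_of_iIndepFun hcentred
    (c := fun i ↦ (‖b i - a i‖₊ / 2) ^ 2) (fun i hi ↦ ?_) ht).trans_eq ?_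
  · exact hasSubgaussianMGF_of_mem_Icc (hX i).aemeasurable (ae_of_all _ (hab i hi))
  · push_cast
    simp only [Real.norm_eq_abs, div_pow, sq_abs, ← Finset.sum_div]
    field_simp

theorem sum_sq_le_sq_mul_sum_div_sq {ι : Type*} (s : Finset ι) {M m : ι → ℝ} {K : ℝ}
    (hM : ∀ i ∈ s, 0 ≤ M i) (hm : ∀ i ∈ s, 0 < m i) (hmK : ∀ i ∈ s, m i ≤ K) :
    ∑ i ∈ s, M i ^ 2 ≤ K ^ 2 * ∑ i ∈ s, (M i / m i) ^ 2 := by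
  rw [Finset.mul_sum]
  refine Finset.sum_le_sum fun i hi ↦ ?_
  have hMK : M i ≤ K * (M i / m i) :=
    calc M i = m i * (M i / m i) := (mul_div_cancel₀ _ (hm i hi).ne').symm
      _ ≤ K * (M i / m i) := by gcongr; exacts [div_nonneg (hM i hi) (hm i hi).le, hmK i hi]
  calc M i ^ 2 ≤ (K * (M i / m i)) ^ 2 := by gcongr; exact hM i hi
    _ = K ^ 2 * (M i / m i) ^ 2 := mul_pow _ _ _

theorem exp_neg_two_mul_sq_div_le_inv_pow_four {V K Δ : ℝ} {n : ℕ} (hV : 0 < V)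
    (hVK : V ≤ K ^ 2 * Δ) (hn : 1 ≤ n) :
    exp (-2 * (K * √(2 * Δ * log n)) ^ 2 / V) ≤ ((n : ℝ) ^ 4)⁻¹ := by
  have hΔ : 0 ≤ Δ := by
    by_contra! h
    nlinarith [sq_nonneg K]
  have hlog : 0 ≤ log n := log_nonneg (by exact_mod_cast hn)
  calc exp (-2 * (K * √(2 * Δ * log n)) ^ 2 / V) ≤ exp (-(4 * log n)) := by
        rw [exp_le_exp, mul_pow, sq_sqrt (by positivity), neg_mul, neg_div, neg_le_neg_iff,
          le_div_iff₀ hV]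
        nlinarith [mul_le_mul_of_nonneg_left hVK (by positivity : (0 : ℝ) ≤ 4 * log n)]
    _ = ((n : ℝ) ^ 4)⁻¹ := by
        rw [exp_neg, ← exp_log (by positivity : (0 : ℝ) < n ^ 4), log_pow]
        norm_num

theorem stmt11_general {Ω : Type*} [MeasurableSpace Ω] (μ : Measure Ω) [IsProbabilityMeasure μ]
    {ι : Type*} (R : Finset ι) (A : ι → Ω → ℝ) (M m : ι → ℝ) (d ε : ℝ) (n : ℕ)
    (hmeas : ∀ r, Measurable (A r))
    (hindep : iIndepFun A μ)
    (hrange : ∀ r ∈ R, ∀ ω, A r ω ∈ Set.Icc (0 : ℝ) (M r))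
    (hM : ∀ r ∈ R, 0 < M r) (hm : ∀ r ∈ R, 0 < m r)
    (hd : 0 < d)
    (hE : ∫ ω, (∑ r ∈ R, A r ω) ∂μ ≤ d)
    (hε : 0 < ε)
    (hmd : ∀ r ∈ R, m r ≤ ε * d)
    (hn : 3 ≤ n) :
    μ {ω | (1 + ε * Real.sqrt (2 * (∑ r ∈ R, (M r / m r) ^ 2) * Real.log n)) * d
        ≤ ∑ r ∈ R, A r ω}
      ≤ ((n : ENNReal) ^ 4)⁻¹ := by
  rcases R.eq_empty_or_nonempty with rfl | hR
  · simp [hd.not_ge]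
  set t := ε * d * √(2 * (∑ r ∈ R, (M r / m r) ^ 2) * log n)
  have hsub : {ω | (1 + ε * √(2 * (∑ r ∈ R, (M r / m r) ^ 2) * log n)) * d ≤ ∑ r ∈ R, A r ω}
      ⊆ {ω | t ≤ ∑ r ∈ R, (A r ω - μ[A r])} := by
    have hint : ∀ r ∈ R, Integrable (A r) μ := fun r hr ↦
      Integrable.of_mem_Icc 0 (M r) (hmeas r).aemeasurable (ae_of_all _ (hrange r hr))
    intro ω hω
    simp only [Set.mem_ofPred_eq, Finset.sum_sub_distrib, ← integral_finsetSum R hint] at hω ⊢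
    linarith
  have hV : 0 < ∑ r ∈ R, (M r - 0) ^ 2 :=
    Finset.sum_pos (fun r hr ↦ by simpa using pow_pos (hM r hr) 2) hR
  have hVK : ∑ r ∈ R, (M r - 0) ^ 2 ≤ (ε * d) ^ 2 * ∑ r ∈ R, (M r / m r) ^ 2 := by
    simpa using sum_sq_le_sq_mul_sum_div_sq R (fun r hr ↦ (hM r hr).le) hm hmd
  have hreal : μ.real {ω | t ≤ ∑ r ∈ R, (A r ω - μ[A r])} ≤ ((n : ℝ) ^ 4)⁻¹ :=
    (measureReal_sum_sub_integral_ge_le_of_mem_Icc hmeas hindep hrange (by positivity)).trans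
      (exp_neg_two_mul_sq_div_le_inv_pow_four hV hVK (by omega))
  calc _ ≤ μ {ω | t ≤ ∑ r ∈ R, (A r ω - μ[A r])} := measure_mono hsub
    _ = ENNReal.ofReal (μ.real {ω | t ≤ ∑ r ∈ R, (A r ω - μ[A r])}) := (ofReal_measureReal).symm
    _ ≤ ENNReal.ofReal ((n : ℝ) ^ 4)⁻¹ := ENNReal.ofReal_le_ofReal hreal
    _ = ((n : ENNReal) ^ 4)⁻¹ := by
        rw [ENNReal.ofReal_inv_of_pos (by positivity), ENNReal.ofReal_pow (by positivity),
          ENNReal.ofReal_natCast]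

/-- Hoeffding-type capacity violation bound (profit variant).  For
independent allocations `A r ∈ [0, M r]` with `E[Σ A r] ≤ d`, demands `m r ≤ ε·d`
(`0 < ε ≤ 1`), `Δ = Σ (M r / m r)²` and `n ≥ 3`,
`P(Σ A r ≥ (1 + ε·√(2·Δ·log n))·d) ≤ n⁻⁴`. -/
theorem stmt11 {Ω : Type*} [MeasurableSpace Ω] (μ : Measure Ω) [IsProbabilityMeasure μ]
    {ι : Type*} (R : Finset ι) (A : ι → Ω → ℝ) (M m : ι → ℝ) (d ε : ℝ) (n : ℕ)
    (hmeas : ∀ r, Measurable (A r))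
    (hindep : iIndepFun A μ)
    (hrange : ∀ r ∈ R, ∀ ω, A r ω ∈ Set.Icc (0 : ℝ) (M r))
    (hM : ∀ r ∈ R, 0 < M r) (hm : ∀ r ∈ R, 0 < m r)
    (hd : 0 < d)
    (hE : ∫ ω, (∑ r ∈ R, A r ω) ∂μ ≤ d)
    (hε : 0 < ε) (hε1 : ε ≤ 1)
    (hmd : ∀ r ∈ R, m r ≤ ε * d)
    (hn : 3 ≤ n) :
    μ {ω | (1 + ε * Real.sqrt (2 * (∑ r ∈ R, (M r / m r) ^ 2) * Real.log n)) * d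
        ≤ ∑ r ∈ R, A r ω}
      ≤ ((n : ENNReal) ^ 4)⁻¹ :=
  stmt11_general μ R A M m d ε n hmeas hindep hrange hM hm hd hE hε hmd hn
end

section
/- Let {A_r}_{r∈R} be independent random variables with A_r ∈ [0, M_r], and let A = Σ_r A_r with E[A] ≤ 2d for some d > 0 (the doubled capacity arising from rescaled decomposition weights). Suppose 0 < ε ≤ 1, m_r ≤ ε·d for all r, Δ = Σ_r (M_r/m_r)², and n ≥ 3. Then P(A ≥ (2 + ε·√(2·Δ·log n))·d) ≤ n^{−4}. -/
/-!
Hoeffding's inequality bounds the probability that `Σ A r` exceeds its mean by `t` by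
`exp (-2 t² / Σ M r²)`. Since `M r ≤ (M r / m r) · ε d`, we have `Σ M r² ≤ Δ (ε d)²`, so the
deviation `t = ε √(2 Δ log n) · d` makes the exponent at most `-4 log n`; and `E[A] ≤ 2 d` puts
the threshold `(2 + ε √(2 Δ log n)) d` at least `t` above the mean.
-/

open MeasureTheory ProbabilityTheory Real

theorem measureReal_sum_ge_le_of_iIndepFun_of_mem_Icc {Ω ι : Type*} [MeasurableSpace Ω]
    {μ : Measure Ω} {X : ι → Ω → ℝ} (hindep : iIndepFun X μ) {s : Finset ι}
    (hX : ∀ i ∈ s, AEMeasurable (X i) μ) {a b : ι → ℝ}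
    (hbd : ∀ i ∈ s, ∀ᵐ ω ∂μ, X i ω ∈ Set.Icc (a i) (b i)) {t : ℝ} (ht : 0 ≤ t) :
    μ.real {ω | ∑ i ∈ s, μ[X i] + t ≤ ∑ i ∈ s, X i ω}
      ≤ exp (-2 * t ^ 2 / ∑ i ∈ s, (b i - a i) ^ 2) := by
  have := hindep.isProbabilityMeasure
  have hcentered : iIndepFun (fun i ω ↦ X i ω - μ[X i]) μ :=
    hindep.comp (fun i x ↦ x - ∫ ω, X i ω ∂μ) (fun i ↦ measurable_id.sub_const _)
  have hsub := HasSubgaussianMGF.measure_sum_ge_le_of_iIndepFun hcentered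
    (fun i hi ↦ hasSubgaussianMGF_of_mem_Icc (hX i hi) (hbd i hi)) ht
  have hparam : 2 * ((∑ i ∈ s, (‖b i - a i‖₊ / 2) ^ 2 : NNReal) : ℝ)
      = (∑ i ∈ s, (b i - a i) ^ 2) / 2 := by
    push_cast
    simp only [Real.norm_eq_abs, div_pow, sq_abs, ← Finset.sum_div]
    ring
  rw [hparam] at hsub
  simp only [Finset.sum_sub_distrib, le_sub_iff_add_le'] at hsub
  convert hsub using 2
  ring

theorem sum_sq_le_sum_div_sq_mul_sq {ι : Type*} {s : Finset ι} {x y : ι → ℝ} {D : ℝ}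
    (hx : ∀ i ∈ s, 0 ≤ x i) (hy : ∀ i ∈ s, 0 < y i) (hyD : ∀ i ∈ s, y i ≤ D) :
    ∑ i ∈ s, x i ^ 2 ≤ (∑ i ∈ s, (x i / y i) ^ 2) * D ^ 2 := by
  rw [Finset.sum_mul]
  refine Finset.sum_le_sum fun i hi ↦ ?_
  rw [← mul_pow]
  gcongr
  · exact hx i hi
  calc x i = x i / y i * y i := (div_mul_cancel₀ _ (hy i hi).ne').symm
    _ ≤ x i / y i * D := by gcongr; exacts [div_nonneg (hx i hi) (hy i hi).le, hyD i hi]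

theorem neg_two_mul_sq_div_le_neg_four_mul {S Δ L ε d : ℝ} (hS : 0 < S) (hΔ : 0 ≤ Δ)
    (hL : 0 ≤ L) (hSΔ : S ≤ Δ * (ε * d) ^ 2) :
    -2 * (ε * √(2 * Δ * L) * d) ^ 2 / S ≤ -(4 * L) := by
  have hsq : (ε * √(2 * Δ * L) * d) ^ 2 = 2 * L * (Δ * (ε * d) ^ 2) := by
    rw [mul_pow, mul_pow, sq_sqrt (by positivity)]
    ring
  rw [div_le_iff₀ hS, hsq]
  nlinarith

theorem ofReal_exp_neg_nat_mul_log {n : ℕ} (hn : n ≠ 0) (k : ℕ) :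
    ENNReal.ofReal (exp (-(k * log n))) = ((n : ENNReal) ^ k)⁻¹ := by
  have hn' : (0 : ℝ) < n := by positivity
  rw [exp_neg, exp_nat_mul, exp_log hn', ENNReal.ofReal_inv_of_pos (by positivity),
    ENNReal.ofReal_pow hn'.le, ENNReal.ofReal_natCast]

theorem stmt12_general {Ω : Type*} [MeasurableSpace Ω] (μ : Measure Ω) [IsProbabilityMeasure μ]
    {ι : Type*} (R : Finset ι) (A : ι → Ω → ℝ) (M m : ι → ℝ) (d ε : ℝ) (n : ℕ)
    (hmeas : ∀ r, Measurable (A r))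
    (hindep : iIndepFun A μ)
    (hrange : ∀ r ∈ R, ∀ ω, A r ω ∈ Set.Icc (0 : ℝ) (M r))
    (hM : ∀ r ∈ R, 0 < M r) (hm : ∀ r ∈ R, 0 < m r)
    (hd : 0 < d)
    (hE : ∫ ω, (∑ r ∈ R, A r ω) ∂μ ≤ 2 * d)
    (hε : 0 < ε)
    (hmd : ∀ r ∈ R, m r ≤ ε * d) :
    μ {ω | (2 + ε * Real.sqrt (2 * (∑ r ∈ R, (M r / m r) ^ 2) * Real.log n)) * d
        ≤ ∑ r ∈ R, A r ω}
      ≤ ((n : ENNReal) ^ 4)⁻¹ := by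
  rcases R.eq_empty_or_nonempty with rfl | hR
  · have h2d : ¬ 2 * d ≤ 0 := by linarith
    simp [h2d]
  rcases eq_or_ne n 0 with rfl | hn
  · simp
  set Δ := ∑ r ∈ R, (M r / m r) ^ 2
  set c := ε * √(2 * Δ * log n)
  have hmean : ∑ r ∈ R, μ[A r] ≤ 2 * d := by
    rwa [← integral_finsetSum R fun r hr ↦
      Integrable.of_mem_Icc 0 (M r) (hmeas r).aemeasurable (ae_of_all _ (hrange r hr))]
  have hevent : {ω | (2 + c) * d ≤ ∑ r ∈ R, A r ω}
      ⊆ {ω | ∑ r ∈ R, μ[A r] + c * d ≤ ∑ r ∈ R, A r ω} :=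
    Set.ofPred_subset_ofPred.2 fun ω hω ↦ by linarith
  have hexponent : -2 * (c * d) ^ 2 / ∑ r ∈ R, M r ^ 2 ≤ -((4 : ℕ) * log n) := by
    exact_mod_cast neg_two_mul_sq_div_le_neg_four_mul
      (Finset.sum_pos (fun r hr ↦ pow_pos (hM r hr) 2) hR) (by positivity)
      (log_natCast_nonneg n)
      (sum_sq_le_sum_div_sq_mul_sq (fun r hr ↦ (hM r hr).le) hm hmd)
  calc μ {ω | (2 + c) * d ≤ ∑ r ∈ R, A r ω}
      ≤ ENNReal.ofReal (μ.real {ω | ∑ r ∈ R, μ[A r] + c * d ≤ ∑ r ∈ R, A r ω}) := by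
        rw [ofReal_measureReal]
        exact measure_mono hevent
    _ ≤ ENNReal.ofReal (exp (-2 * (c * d) ^ 2 / ∑ r ∈ R, M r ^ 2)) := by
        gcongr
        simpa only [Pi.zero_apply, sub_zero] using
          measureReal_sum_ge_le_of_iIndepFun_of_mem_Icc hindep (a := 0)
            (fun r _ ↦ (hmeas r).aemeasurable) (fun r hr ↦ ae_of_all _ (hrange r hr))
            (by positivity)
    _ ≤ ENNReal.ofReal (exp (-((4 : ℕ) * log n))) := by gcongr
    _ = ((n : ENNReal) ^ 4)⁻¹ := ofReal_exp_neg_nat_mul_log hn 4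

/-- Hoeffding-type capacity violation bound (cost variant, with doubled expected load).  For
independent allocations `A r ∈ [0, M r]` with `E[Σ A r] ≤ 2·d`, demands `m r ≤ ε·d`
(`0 < ε ≤ 1`), `Δ = Σ (M r / m r)²` and `n ≥ 3`,
`P(Σ A r ≥ (2 + ε·√(2·Δ·log n))·d) ≤ n⁻⁴`. -/
theorem stmt12 {Ω : Type*} [MeasurableSpace Ω] (μ : Measure Ω) [IsProbabilityMeasure μ]
    {ι : Type*} (R : Finset ι) (A : ι → Ω → ℝ) (M m : ι → ℝ) (d ε : ℝ) (n : ℕ)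
    (hmeas : ∀ r, Measurable (A r))
    (hindep : iIndepFun A μ)
    (hrange : ∀ r ∈ R, ∀ ω, A r ω ∈ Set.Icc (0 : ℝ) (M r))
    (hM : ∀ r ∈ R, 0 < M r) (hm : ∀ r ∈ R, 0 < m r)
    (hd : 0 < d)
    (hE : ∫ ω, (∑ r ∈ R, A r ω) ∂μ ≤ 2 * d)
    (hε : 0 < ε) (hε1 : ε ≤ 1)
    (hmd : ∀ r ∈ R, m r ≤ ε * d)
    (hn : 3 ≤ n) :
    μ {ω | (2 + ε * Real.sqrt (2 * (∑ r ∈ R, (M r / m r) ^ 2) * Real.log n)) * d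
        ≤ ∑ r ∈ R, A r ω}
      ≤ ((n : ENNReal) ^ 4)⁻¹ :=
  stmt12_general μ R A M m d ε n hmeas hindep hrange hM hm hd hE hε hmd
end

section
/- There exists a directed 3-cycle request graph G_r on vertices {i, j, k} and a substrate graph G_S on six vertices such that the multi-commodity flow LP relaxation for the VNEP admits a feasible fractional solution with x_r = 1 (node mapping variables y all equal to 1/2 and edge flow variables z all equal to 1/2 on appropriate edges), yet no valid integral mapping of G_r onto G_S exists that is covered by the fractional solution; consequently, the integrality gap of the MCF LP formulation for the profit variant of the VNEP is unbounded. -/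
/-- The substrate of the counterexample: the directed 6-cycle `u₀ → u₁ → … → u₅ → u₀`. -/
def cycleSubstrate : Finset (Fin 6 × Fin 6) :=
  Finset.univ.image (fun k : Fin 6 => (k, k + 1))

/-- Allowed substrate nodes for the three virtual nodes `i = 0`, `j = 1`, `k = 2`. -/
def allowedNodes (a : Fin 3) : Finset (Fin 6) :=
  if a = 0 then {0, 3} else if a = 1 then {1, 4} else {2, 5}

/-- Allowed substrate edges for the three virtual edges. -/
def allowedEdges (a b : Fin 3) : Finset (Fin 6 × Fin 6) :=
  if a = 0 ∧ b = 1 then {(0, 1), (3, 4)}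
  else if a = 1 ∧ b = 2 then {(1, 2), (4, 5)}
  else if a = 2 ∧ b = 0 then {(2, 3), (5, 0)}
  else ∅

/-- The virtual edges of the directed 3-cycle request. -/
def reqEdges : Finset (Fin 3 × Fin 3) := {(0, 1), (1, 2), (2, 0)}

/-!
Putting weight `1/2` on both antipodal copies of every virtual node and edge satisfies
flow conservation: the allowed edges of a virtual edge `(a, b)` leave exactly the allowed
nodes of `a` and enter exactly those of `b`, so the net outflow at `u` is `y a u - y b u`.
Integrally, however, every allowed edge set consists of
two non-adjacent edges of the form `(u, u + 1)`, so each virtual edge must be mapped onto a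
single substrate edge advancing by one step. Going once around the request 3-cycle would
then return to the start after three steps of the 6-cycle, which is impossible.
-/

open Finset

theorem IsPath.mem_of_ne {V : Type*} {E : Finset (V × V)} {a b : V} {p : List V}
    (hp : IsPath E a b p) (hab : a ≠ b) (hE : ∀ e ∈ E, ∀ e' ∈ E, e.2 ≠ e'.1) :
    (a, b) ∈ E := by
  obtain ⟨hne, hhead, hlast, -, hedges⟩ := hp
  match p, hne, hhead, hlast, hedges with
  | [x], _, hhead, hlast, _ =>
    simp only [List.head?_cons, List.getLast?_singleton, Option.some.injEq] at hhead hlast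
    exact absurd (hhead.symm.trans hlast) hab
  | [x, y], _, hhead, hlast, hedges =>
    simp only [List.head?_cons, List.getLast?_cons_cons, List.getLast?_singleton,
      Option.some.injEq] at hhead hlast
    subst hhead hlast
    exact hedges _ (by simp [pathEdges])
  | x :: y :: w :: _, _, _, _, hedges =>
    exact absurd rfl (hE _ (hedges (x, y) (by simp [pathEdges]))
      _ (hedges (y, w) (by simp [pathEdges])))

lemma allowedNodes_disjoint {a b : Fin 3} (hab : a ≠ b) :
    Disjoint (allowedNodes a) (allowedNodes b) := by
  revert a b; decide

lemma allowedEdges_snd_ne_fst (a b : Fin 3) :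
    ∀ e ∈ allowedEdges a b, ∀ e' ∈ allowedEdges a b, e.2 ≠ e'.1 := by
  revert a b; decide

lemma allowedEdges_snd_eq_fst_add_one {a b : Fin 3} {e : Fin 6 × Fin 6}
    (he : e ∈ allowedEdges a b) : e.2 = e.1 + 1 := by
  revert a b e; decide

lemma not_exists_valid_mapping :
    ¬ ∃ mV : Fin 3 → Fin 6,
        (∀ a, mV a ∈ allowedNodes a) ∧
        (∀ a b, (a, b) ∈ reqEdges →
          ∃ p : List (Fin 6), IsPath (allowedEdges a b) (mV a) (mV b) p) := by
  rintro ⟨m, hm, hpath⟩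
  have hstep : ∀ a b, (a, b) ∈ reqEdges → m b = m a + 1 := by
    intro a b hab
    obtain ⟨p, hp⟩ := hpath a b hab
    have hne : a ≠ b := by fin_cases hab <;> decide
    have hmne : m a ≠ m b := fun h =>
      Finset.disjoint_left.1 (allowedNodes_disjoint hne) (hm a) (h ▸ hm b)
    exact allowedEdges_snd_eq_fst_add_one (hp.mem_of_ne hmne (allowedEdges_snd_ne_fst a b))
  have hround : m 0 = m 0 + 3 :=
    calc m 0 = m 2 + 1 := hstep 2 0 (by decide)
      _ = m 1 + 1 + 1 := by rw [hstep 1 2 (by decide)]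
      _ = m 0 + 1 + 1 + 1 := by rw [hstep 0 1 (by decide)]
      _ = m 0 + 3 := by rw [add_assoc, add_assoc]; rfl
  exact absurd (left_eq_add.1 hround) (by decide)

noncomputable def halfNodeMapping (a : Fin 3) (u : Fin 6) : ℝ :=
  if u ∈ allowedNodes a then 1 / 2 else 0

noncomputable def halfEdgeFlow (a b : Fin 3) (e : Fin 6 × Fin 6) : ℝ :=
  if e ∈ allowedEdges a b then 1 / 2 else 0

lemma halfNodeMapping_nonneg (a : Fin 3) (u : Fin 6) : 0 ≤ halfNodeMapping a u := by
  unfold halfNodeMapping; split_ifs <;> norm_num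

lemma halfNodeMapping_le_one (a : Fin 3) (u : Fin 6) : halfNodeMapping a u ≤ 1 := by
  unfold halfNodeMapping; split_ifs <;> norm_num

lemma halfEdgeFlow_nonneg (a b : Fin 3) (e : Fin 6 × Fin 6) : 0 ≤ halfEdgeFlow a b e := by
  unfold halfEdgeFlow; split_ifs <;> norm_num

lemma card_allowedNodes (a : Fin 3) : (allowedNodes a).card = 2 := by
  revert a; decide

lemma sum_halfNodeMapping (a : Fin 3) : ∑ u, halfNodeMapping a u = 1 := by
  unfold halfNodeMapping
  rw [sum_ite_mem, univ_inter, sum_const, card_allowedNodes]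
  norm_num

lemma cycleSubstrate_filter_fst (u : Fin 6) :
    cycleSubstrate.filter (fun e => e.1 = u) = {(u, u + 1)} := by
  revert u; decide

lemma cycleSubstrate_filter_snd (u : Fin 6) :
    cycleSubstrate.filter (fun e => e.2 = u) = {(u - 1, u)} := by
  revert u; decide

lemma mem_allowedEdges_out_iff {a b : Fin 3} (hab : (a, b) ∈ reqEdges) (u : Fin 6) :
    (u, u + 1) ∈ allowedEdges a b ↔ u ∈ allowedNodes a := by
  revert u; fin_cases hab <;> decide

lemma mem_allowedEdges_in_iff {a b : Fin 3} (hab : (a, b) ∈ reqEdges) (u : Fin 6) :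
    (u - 1, u) ∈ allowedEdges a b ↔ u ∈ allowedNodes b := by
  revert u; fin_cases hab <;> decide

lemma halfEdgeFlow_conservation {a b : Fin 3} (hab : (a, b) ∈ reqEdges) (u : Fin 6) :
    (∑ e ∈ cycleSubstrate.filter (fun e => e.1 = u), halfEdgeFlow a b e)
      - (∑ e ∈ cycleSubstrate.filter (fun e => e.2 = u), halfEdgeFlow a b e)
      = halfNodeMapping a u - halfNodeMapping b u := by
  simp only [cycleSubstrate_filter_fst, cycleSubstrate_filter_snd, sum_singleton, halfEdgeFlow,
    halfNodeMapping, mem_allowedEdges_out_iff hab, mem_allowedEdges_in_iff hab]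

/-- For the 3-cycle request on the 6-cycle substrate with antipodal node
placement restrictions, the MCF LP relaxation admits a feasible fractional solution with
`x_r = 1`, yet no valid integral mapping of the request exists at all; hence the
integrality gap of the MCF formulation for the profit variant is unbounded. -/
theorem stmt18 :
    (∃ (y : Fin 3 → Fin 6 → ℝ) (z : Fin 3 → Fin 3 → Fin 6 × Fin 6 → ℝ),
      (∀ a u, 0 ≤ y a u) ∧ (∀ a u, y a u ≤ 1) ∧
      (∀ a u, u ∉ allowedNodes a → y a u = 0) ∧
      (∀ a, ∑ u, y a u = 1) ∧
      (∀ a b e, 0 ≤ z a b e) ∧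
      (∀ a b e, e ∉ allowedEdges a b → z a b e = 0) ∧
      (∀ a b, (a, b) ∈ reqEdges → ∀ u : Fin 6,
        (∑ e ∈ cycleSubstrate.filter (fun e => e.1 = u), z a b e)
          - (∑ e ∈ cycleSubstrate.filter (fun e => e.2 = u), z a b e)
          = y a u - y b u)) ∧
    ¬ ∃ mV : Fin 3 → Fin 6,
        (∀ a, mV a ∈ allowedNodes a) ∧
        (∀ a b, (a, b) ∈ reqEdges →
          ∃ p : List (Fin 6), IsPath (allowedEdges a b) (mV a) (mV b) p) := by
  exact ⟨⟨halfNodeMapping, halfEdgeFlow, halfNodeMapping_nonneg, halfNodeMapping_le_one,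
    fun _ _ hu => if_neg hu, sum_halfNodeMapping, halfEdgeFlow_nonneg,
    fun _ _ _ he => if_neg he, fun _ _ => halfEdgeFlow_conservation⟩,
    not_exists_valid_mapping⟩
end
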